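/- Let f be an orientation-preserving homeomorphism of the circle S¹ possessing at least one periodic point. Then every point x ∈ S¹ has a well-defined Birkhoff limit μ_x, and μ_x is a periodic Dirac measure: μ_x = (1/q)∑_{j=0}^{q−1} δ_{f^j(p)} for some periodic point p of f of period q. -/

import Mathlib

open MeasureTheory Filter Topology ENNReal Function

noncomputable section

attribute [local instance] ZeroLEOneClass.factZeroLtOne

instance : IsProbabilityMeasure (volume : Measure (AddCircle (1 : ℝ))) :=
  ⟨UnitAddCircle.measure_univ⟩

/-- The circle `ℝ/ℤ`, with its quotient metric and its Haar (Lebesgue) probability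
measure `volume`. -/
abbrev Circle1 := AddCircle (1 : ℝ)

/-- The `n`-th Birkhoff average of the observable `φ` along the orbit of `x` under `f`. -/
def birkhoffAvg {X : Type*} [MetricSpace X] (f : X → X) (φ : X → ℝ) (x : X) (n : ℕ) : ℝ :=
  (n : ℝ)⁻¹ * ∑ j ∈ Finset.range n, φ (f^[j] x)

/-- `μ` is the Birkhoff limit of the point `x` under `f`: the probability measures
`(1/n) ∑_{j<n} δ_{f^j x}` converge to `μ` in the weak* topology, i.e. the Birkhoff averages of
every continuous observable converge to the corresponding integral. -/
def IsBirkhoffLimit {X : Type*} [MetricSpace X] [MeasurableSpace X] [BorelSpace X]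
    (f : X → X) (x : X) (μ : Measure X) : Prop :=
  IsProbabilityMeasure μ ∧
    ∀ φ : C(X, ℝ), Tendsto (birkhoffAvg f φ x) atTop (𝓝 (∫ y, φ y ∂μ))

/-- The basin of a measure `μ`: the set of points whose Birkhoff limit exists and equals `μ`. -/
def basin {X : Type*} [MetricSpace X] [MeasurableSpace X] [BorelSpace X]
    (f : X → X) (μ : Measure X) : Set X := {x | IsBirkhoffLimit f x μ}

/-- `F` is an increasing (degree-one) lift of the circle map `f`. -/
def IsOrientedLift (f : Circle1 → Circle1) (F : ℝ → ℝ) : Prop :=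
  Continuous F ∧ StrictMono F ∧ (∀ x : ℝ, F (x + 1) = F x + 1) ∧
    ∀ x : ℝ, f (↑x) = ↑(F x)

/-! Let `q₀` be a period of some point `↑t₀`; shifting a lift of `f^[q₀]` by an integer gives a
lift `G` fixing `t₀`. Then `G` is a continuous increasing map of `ℝ` fixing the whole grid
`t₀ + ℤ`, so every orbit of `G` is monotone and trapped between two consecutive grid points; it
converges to a fixed point of `G`. Downstairs, every orbit of `f^[q₀]` converges to a fixed point
`p` of `f^[q₀]`, so the orbit of `x` under `f` is asymptotic to the periodic orbit of `p`, and
Birkhoff averages along both agree in the limit. -/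

open Set Finset

theorem Monotone.exists_tendsto_iterate_isFixedPt_of_mem_Icc {α : Type*}
    [ConditionallyCompleteLinearOrder α] [TopologicalSpace α] [OrderTopology α] {g : α → α}
    (hgm : Monotone g) (hgc : Continuous g) {a b t : α} (ha : IsFixedPt g a)
    (hb : IsFixedPt g b) (ht : t ∈ Icc a b) :
    ∃ s, IsFixedPt g s ∧ Tendsto (fun k => g^[k] t) atTop (𝓝 s) := by
  have hmaps : MapsTo g (Icc a b) (Icc a b) := fun u hu => ⟨ha ▸ hgm hu.1, hb ▸ hgm hu.2⟩
  suffices ∃ s, Tendsto (fun k => g^[k] t) atTop (𝓝 s) from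
    this.imp fun s hs => ⟨isFixedPt_of_tendsto_iterate hs hgc.continuousAt, hs⟩
  rcases le_total t (g t) with hup | hdown
  · have hbdd : BddAbove (range fun k => g^[k] t) :=
      ⟨b, by rintro _ ⟨k, rfl⟩; exact (hmaps.iterate k ht).2⟩
    exact ⟨_, tendsto_atTop_ciSup (hgm.monotone_iterate_of_le_map hup) hbdd⟩
  · have hbdd : BddBelow (range fun k => g^[k] t) :=
      ⟨a, by rintro _ ⟨k, rfl⟩; exact (hmaps.iterate k ht).1⟩
    exact ⟨_, tendsto_atTop_ciInf (hgm.antitone_iterate_of_map_le hdown) hbdd⟩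

namespace IsOrientedLift

variable {f : Circle1 → Circle1} {F : ℝ → ℝ}

theorem iterate (hF : IsOrientedLift f F) (n : ℕ) : IsOrientedLift f^[n] F^[n] :=
  ⟨hF.1.iterate n, hF.2.1.iterate n, Function.Commute.iterate_left (g := (· + 1)) hF.2.2.1 n,
    fun x => (Semiconj.iterate_right (f := ((↑) : ℝ → Circle1)) (fun x => (hF.2.2.2 x).symm)
      n x).symm⟩

theorem sub_int (hF : IsOrientedLift f F) (m : ℤ) : IsOrientedLift f (fun u => F u - m) :=
  ⟨hF.1.sub continuous_const, fun _ _ h => sub_lt_sub_right (hF.2.1 h) _,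
    fun x => by simp only [hF.2.2.1]; ring,
    fun x => by
      rw [hF.2.2.2, AddCircle.coe_sub,
        (AddCircle.coe_eq_zero_iff 1 (x := (m : ℝ))).2 ⟨m, zsmul_one _⟩, sub_zero]⟩

theorem exists_lift_isFixedPt (hF : IsOrientedLift f F) {t : ℝ} (ht : IsFixedPt f t) :
    ∃ G, IsOrientedLift f G ∧ IsFixedPt G t := by
  have : F t - t ∈ AddSubgroup.zmultiples (1 : ℝ) := by
    rw [← QuotientAddGroup.eq_iff_sub_mem]
    exact (hF.2.2.2 t).symm.trans ht
  obtain ⟨m, hm⟩ := AddSubgroup.mem_zmultiples_iff.1 this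
  refine ⟨_, hF.sub_int m, ?_⟩
  rw [IsFixedPt, ← zsmul_one, hm]
  ring

theorem exists_tendsto_iterate_isFixedPt (hF : IsOrientedLift f F)
    (hfix : ∃ p, IsFixedPt f p) (x : Circle1) :
    ∃ p, IsFixedPt f p ∧ Tendsto (fun k => f^[k] x) atTop (𝓝 p) := by
  obtain ⟨p₀, hp₀⟩ := hfix
  obtain ⟨t₀, rfl⟩ := QuotientAddGroup.mk_surjective p₀
  obtain ⟨G, hG, hGt₀⟩ := hF.exists_lift_isFixedPt hp₀
  have hGint (n : ℤ) : IsFixedPt G (t₀ + n) :=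
    (AddConstMapClass.map_add_int (⟨G, hG.2.2.1⟩ : AddConstMap ℝ ℝ 1 1) t₀ n).trans
      (congrArg (· + (n : ℝ)) hGt₀)
  obtain ⟨t, rfl⟩ := QuotientAddGroup.mk_surjective x
  have ht : t ∈ Icc (t₀ + ⌊t - t₀⌋) (t₀ + (⌊t - t₀⌋ + 1 : ℤ)) := by
    constructor <;> push_cast <;> linarith [Int.floor_le (t - t₀), Int.lt_floor_add_one (t - t₀)]
  obtain ⟨s, hs, hconv⟩ :=
    hG.2.1.monotone.exists_tendsto_iterate_isFixedPt_of_mem_Icc hG.1 (hGint _) (hGint _) ht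
  refine ⟨s, by rw [IsFixedPt, hG.2.2.2, hs.eq], ?_⟩
  simp_rw [(hG.iterate _).2.2.2 t]
  exact (continuous_quotient_mk'.tendsto s).comp hconv

end IsOrientedLift

theorem Function.Periodic.tendsto_cesaro {c : ℕ → ℝ} {q : ℕ} (hc : Periodic c q) (hq : 0 < q) :
    Tendsto (fun n : ℕ => (n : ℝ)⁻¹ * ∑ j ∈ range n, c j) atTop
      (𝓝 ((q : ℝ)⁻¹ * ∑ j ∈ range q, c j)) := by
  set a := (q : ℝ)⁻¹ * ∑ j ∈ range q, c j
  set d : ℕ → ℝ := fun n => ∑ j ∈ range n, c j - n * a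
  have hd : Periodic d q := fun n => by
    have hsum : ∑ j ∈ range (n + q), c j = ∑ j ∈ range q, c j + ∑ j ∈ range n, c j := by
      rw [add_comm n q, sum_range_add]
      exact congrArg _ (sum_congr rfl fun j _ => by rw [add_comm, hc])
    have hqa : (q : ℝ) * a = ∑ j ∈ range q, c j :=
      mul_inv_cancel_left₀ (Nat.cast_ne_zero.2 hq.ne') _
    simp only [d, hsum, Nat.cast_add]
    linarith
  -- `d` measures the deviation from linear growth; being `q`-periodic, it is bounded.
  have hbound (n : ℕ) : ‖d n‖ ≤ ∑ i ∈ range q, ‖d i‖ := by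
    rw [← hd.map_mod_nat n]
    exact single_le_sum (fun i _ => norm_nonneg (d i)) (mem_range.2 (Nat.mod_lt n hq))
  rw [← tendsto_sub_nhds_zero_iff]
  refine squeeze_zero_norm' ?_ (tendsto_const_div_atTop_nhds_zero_nat (∑ i ∈ range q, ‖d i‖))
  filter_upwards [eventually_ne_atTop 0] with n hn
  have : (n : ℝ)⁻¹ * ∑ j ∈ range n, c j - a = d n / n := by field_simp [d]; ring
  rw [this, norm_div, Real.norm_natCast]
  exact div_le_div_of_nonneg_right (hbound n) n.cast_nonneg

theorem Function.IsPeriodicPt.tendsto_comp_iterate_sub {X E : Type*} [TopologicalSpace X]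
    [SeminormedAddCommGroup E] {f : X → X} {p : X} {q : ℕ} (hp : IsPeriodicPt f q p)
    (hq : 0 < q) (hf : Continuous f) {φ : X → E} (hφ : Continuous φ) {x : X}
    (hx : Tendsto (fun k => (f^[q])^[k] x) atTop (𝓝 p)) :
    Tendsto (fun j => φ (f^[j] x) - φ (f^[j] p)) atTop (𝓝 0) := by
  set v : ℕ → Fin q → E := fun k r => φ (f^[r] ((f^[q])^[k] x)) - φ (f^[r] p)
  have hv : Tendsto v atTop (𝓝 0) := tendsto_pi_nhds.2 fun r => by
    rw [Pi.zero_apply, ← sub_self (φ (f^[r] p))]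
    exact (((hφ.comp (hf.iterate r)).tendsto p).comp hx).sub_const _
  have hsplit (j : ℕ) : φ (f^[j] x) - φ (f^[j] p) = v (j / q) ⟨j % q, Nat.mod_lt j hq⟩ := by
    simp only [v]
    rw [hp.iterate_mod_apply, ← iterate_mul, ← iterate_add_apply, Nat.mod_add_div]
  refine squeeze_zero_norm (fun j => (hsplit j).symm ▸ norm_le_pi_norm (v (j / q)) _) ?_
  exact (tendsto_zero_iff_norm_tendsto_zero.1 hv).comp (Nat.tendsto_div_const_atTop hq.ne')

theorem Function.IsPeriodicPt.tendsto_birkhoffAvg {X : Type*} [MetricSpace X] {f : X → X}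
    {p : X} {q : ℕ} (hp : IsPeriodicPt f q p) (hq : 0 < q) (φ : X → ℝ) :
    Tendsto (birkhoffAvg f φ p) atTop (𝓝 ((q : ℝ)⁻¹ * ∑ j ∈ range q, φ (f^[j] p))) :=
  Periodic.tendsto_cesaro (fun j => by simp only [iterate_add_apply, hp.eq]) hq

section PeriodicOrbitMeasure

variable {X : Type*} [MeasurableSpace X]

def periodicOrbitMeasure (f : X → X) (p : X) (q : ℕ) : Measure X :=
  (q : ℝ≥0∞)⁻¹ • ∑ j ∈ range q, Measure.dirac (f^[j] p)

theorem isProbabilityMeasure_periodicOrbitMeasure {f : X → X} {p : X} {q : ℕ} (hq : q ≠ 0) :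
    IsProbabilityMeasure (periodicOrbitMeasure f p q) := by
  constructor
  simp only [periodicOrbitMeasure, Measure.smul_apply, Measure.coe_finsetSum, Finset.sum_apply,
    measure_univ, sum_const, card_range, nsmul_eq_mul, mul_one, smul_eq_mul]
  exact ENNReal.inv_mul_cancel (Nat.cast_ne_zero.2 hq) (natCast_ne_top q)

theorem integral_periodicOrbitMeasure [MeasurableSingletonClass X] {f : X → X} {p : X} {q : ℕ}
    (φ : X → ℝ) :
    ∫ y, φ y ∂(periodicOrbitMeasure f p q) = (q : ℝ)⁻¹ * ∑ j ∈ range q, φ (f^[j] p) := by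
  rw [periodicOrbitMeasure, integral_smul_measure,
    integral_finsetSum_measure fun j _ => integrable_dirac enorm_lt_top]
  simp [integral_dirac, ENNReal.toReal_inv]

end PeriodicOrbitMeasure

theorem isBirkhoffLimit_periodicOrbitMeasure {X : Type*} [MetricSpace X] [MeasurableSpace X]
    [BorelSpace X] {f : X → X} (hf : Continuous f) {p x : X} {q₀ q : ℕ} (hq₀ : 0 < q₀)
    (hp₀ : IsPeriodicPt f q₀ p) (hx : Tendsto (fun k => (f^[q₀])^[k] x) atTop (𝓝 p))
    (hq : 0 < q) (hp : IsPeriodicPt f q p) :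
    IsBirkhoffLimit f x (periodicOrbitMeasure f p q) := by
  refine ⟨isProbabilityMeasure_periodicOrbitMeasure hq.ne', fun φ => ?_⟩
  rw [integral_periodicOrbitMeasure]
  have := (hp₀.tendsto_comp_iterate_sub hq₀ hf φ.continuous hx).cesaro.add
    (hp.tendsto_birkhoffAvg hq φ)
  rw [zero_add] at this
  refine this.congr fun n => ?_
  simp only [birkhoffAvg, sum_sub_distrib]
  ring

/-- If an orientation-preserving circle homeomorphism has a periodic point, then every point of
the circle has a well-defined Birkhoff limit, and this limit is a periodic Dirac measure
`(1/q) ∑_{j<q} δ_{f^j p}` for some periodic point `p` of (minimal) period `q`. -/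
theorem birkhoffLimit_periodicDirac_of_orientation_preserving_with_periodic_point
    (f : Circle1 → Circle1) (hf : IsHomeomorph f) (hor : ∃ F, IsOrientedLift f F)
    (hper : ∃ (p : Circle1) (q : ℕ), 1 ≤ q ∧ f^[q] p = p) :
    ∀ x : Circle1, ∃ (p : Circle1) (q : ℕ), 1 ≤ q ∧ f^[q] p = p ∧
      (∀ r, 1 ≤ r → r < q → f^[r] p ≠ p) ∧
      IsBirkhoffLimit f x
        ((q : ℝ≥0∞)⁻¹ • ∑ j ∈ Finset.range q, Measure.dirac (f^[j] p)) := by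
  intro x
  obtain ⟨F, hF⟩ := hor
  obtain ⟨p₀, q₀, hq₀, hp₀⟩ := hper
  obtain ⟨p, hp, hx⟩ := (hF.iterate q₀).exists_tendsto_iterate_isFixedPt ⟨p₀, hp₀⟩ x
  have hq : 0 < minimalPeriod f p := IsPeriodicPt.minimalPeriod_pos hq₀ hp
  refine ⟨p, minimalPeriod f p, hq, isPeriodicPt_minimalPeriod f p,
    fun r hr hrq => not_isPeriodicPt_of_pos_of_lt_minimalPeriod (by omega) hrq, ?_⟩
  exact isBirkhoffLimit_periodicOrbitMeasure hf.continuous hq₀ hp hx hq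
    (isPeriodicPt_minimalPeriod f p)

end
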